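/- Let x₁, x₂, x₃, x₄ be distinct points in the Euclidean plane such that x₄ lies in the interior of the triangle x₁x₂x₃, and for {i, j, k, l} = {1, 2, 3, 4} let α_{i,j} denote the angle ∠x_k x_i x_l. Then the multiset of angles of any triangle with side lengths dist(x₁,x₂)·dist(x₃,x₄), dist(x₁,x₃)·dist(x₂,x₄), dist(x₁,x₄)·dist(x₂,x₃) is {α_{1,2} + α_{2,1}, α_{1,3} + α_{3,1}, α_{2,3} + α_{3,2}}. -/

import Mathlib

/-!
Read the plane as `ℂ`. Ptolemy's identity
`(x₁ - x₂)(x₃ - x₄) + (x₁ - x₄)(x₂ - x₃) = (x₁ - x₃)(x₂ - x₄)` shows that the three products of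
distances are the sides of a triangle. By the law of cosines its angles are determined by the
side lengths, so it suffices to show that `θ = ∠ x₂ x₁ x₄ + ∠ x₂ x₃ x₄` satisfies the law of
cosines for the side `|x₁x₃|·|x₂x₄|`. Writing `cos θ` through dot and cross products, the point
`x₄` inside the triangle makes the two cross products of opposite signs, which turns
`cos θ · |x₁x₂||x₁x₄||x₃x₂||x₃x₄|` into the real part of a product of complex numbers that the
same identity evaluates. Finally `θ ≤ π`, since each summand is at most the corresponding angle of
the triangle `x₁x₂x₃`, so `θ` is recovered from its cosine.
-/

open EuclideanGeometry

/-- For `s = {a, b, c}` the argument of `arccos` is `(b² + c² - a²) / (2bc)`, written through the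
sum of squares and the product of `s` so that it depends on `s` only as a multiset. -/
noncomputable def oppositeAngle (s : Multiset ℝ) (a : ℝ) : ℝ :=
  Real.arccos (a * ((s.map (· ^ 2)).sum - 2 * a ^ 2) / (2 * s.prod))

theorem eq_oppositeAngle_of_cos {θ a b c : ℝ} {s : Multiset ℝ} (hs : s = {a, b, c})
    (ha : a ≠ 0) (hb : b ≠ 0) (hc : c ≠ 0) (hθ₀ : 0 ≤ θ) (hθπ : θ ≤ Real.pi)
    (hcos : 2 * b * c * Real.cos θ = b ^ 2 + c ^ 2 - a ^ 2) :
    θ = oppositeAngle s a := by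
  have hcos' : a * ((s.map (· ^ 2)).sum - 2 * a ^ 2) / (2 * s.prod) = Real.cos θ := by
    simp only [hs, Multiset.insert_eq_cons, Multiset.map_cons, Multiset.map_singleton,
      Multiset.sum_cons, Multiset.sum_singleton, Multiset.prod_cons, Multiset.prod_singleton]
    rw [div_eq_iff (by positivity)]
    linear_combination -a * hcos
  rw [oppositeAngle, hcos', Real.arccos_cos hθ₀ hθπ]

section Triangle

variable {V P : Type*} [NormedAddCommGroup V] [InnerProductSpace ℝ V] [MetricSpace P]
  [NormedAddTorsor V P]

theorem angle_eq_oppositeAngle {p q r : P} {s : Multiset ℝ} (hpq : p ≠ q) (hpr : p ≠ r)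
    (hqr : q ≠ r) (hs : s = {dist q r, dist p q, dist p r}) :
    ∠ q p r = oppositeAngle s (dist q r) := by
  refine eq_oppositeAngle_of_cos hs (dist_ne_zero.2 hqr) (dist_ne_zero.2 hpq)
    (dist_ne_zero.2 hpr) (angle_nonneg q p r) (angle_le_pi q p r) ?_
  have hlaw := law_cos q p r
  rw [dist_comm q p, dist_comm r p] at hlaw
  linear_combination hlaw

theorem multiset_angles_eq_map_oppositeAngle {p q r : P} (hpq : p ≠ q) (hpr : p ≠ r)
    (hqr : q ≠ r) :
    ({∠ q p r, ∠ p q r, ∠ p r q} : Multiset ℝ) =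
      ({dist p q, dist p r, dist q r} : Multiset ℝ).map
        (oppositeAngle {dist p q, dist p r, dist q r}) := by
  rw [angle_eq_oppositeAngle (s := {dist p q, dist p r, dist q r}) hpq hpr hqr ?_,
    angle_eq_oppositeAngle (s := {dist p q, dist p r, dist q r}) hpq.symm hqr hpr ?_,
    angle_eq_oppositeAngle (s := {dist p q, dist p r, dist q r}) hpr.symm hqr.symm hpq ?_]
  all_goals simp only [Multiset.insert_eq_cons, Multiset.map_cons, ← Multiset.cons_zero,
    Multiset.map_zero, Multiset.cons_swap, dist_comm q p, dist_comm r p, dist_comm r q]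

end Triangle

theorem exists_eq_smul_add_smul_add_smul_of_mem_convexHull {E : Type*} [AddCommGroup E]
    [Module ℝ E] {x y z p : E} (h : p ∈ convexHull ℝ {x, y, z}) :
    ∃ a b c : ℝ, 0 ≤ a ∧ 0 ≤ b ∧ 0 ≤ c ∧ a + b + c = 1 ∧ p = a • x + b • y + c • z := by
  rw [convexHull_insert (Set.insert_nonempty y {z}), convexHull_pair, mem_convexJoin] at h
  obtain ⟨_, rfl, q, ⟨s, t, hs, ht, hst, rfl⟩, a, r, ha, hr, har, rfl⟩ := h
  refine ⟨a, r * s, r * t, ha, mul_nonneg hr hs, mul_nonneg hr ht, ?_, ?_⟩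
  · linear_combination r * hst + har
  · simp only [smul_add, smul_smul, add_assoc]

section ConvexHull

variable {V : Type*} [NormedAddCommGroup V] [InnerProductSpace ℝ V]

theorem angle_le_angle_of_mem_span {x y z : V} (hy : y ≠ 0)
    (h : y ∈ Submodule.span NNReal {x, z}) :
    InnerProductGeometry.angle x y ≤ InnerProductGeometry.angle x z := by
  rw [InnerProductGeometry.angle_eq_angle_add_add_angle_add_of_mem_span hy h]
  exact le_add_of_nonneg_right (InnerProductGeometry.angle_nonneg y z)

theorem angle_le_angle_of_mem_convexHull {y₁ y₂ y₃ y₄ : V} (h14 : y₁ ≠ y₄)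
    (hy : y₄ ∈ convexHull ℝ {y₁, y₂, y₃}) : ∠ y₂ y₁ y₄ ≤ ∠ y₂ y₁ y₃ := by
  obtain ⟨a, b, c, -, hb, hc, habc, rfl⟩ :=
    exists_eq_smul_add_smul_add_smul_of_mem_convexHull hy
  refine angle_le_angle_of_mem_span (vsub_ne_zero.2 h14.symm)
    (Submodule.mem_span_pair.2 ⟨b.toNNReal, c.toNNReal, ?_⟩)
  rw [NNReal.smul_def, NNReal.smul_def, Real.coe_toNNReal b hb, Real.coe_toNNReal c hc]
  obtain rfl : a = 1 - b - c := by linarith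
  simp only [vsub_eq_sub]
  module

theorem angle_add_angle_le_pi_of_mem_convexHull {y₁ y₂ y₃ y₄ : V} (h12 : y₁ ≠ y₂)
    (h14 : y₁ ≠ y₄) (h34 : y₃ ≠ y₄) (hy : y₄ ∈ convexHull ℝ {y₁, y₂, y₃}) :
    ∠ y₂ y₁ y₄ + ∠ y₂ y₃ y₄ ≤ Real.pi := by
  have h₁ : ∠ y₂ y₁ y₄ ≤ ∠ y₂ y₁ y₃ := angle_le_angle_of_mem_convexHull h14 hy
  have h₃ : ∠ y₂ y₃ y₄ ≤ ∠ y₂ y₃ y₁ :=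
    angle_le_angle_of_mem_convexHull h34
      (by rwa [Set.pair_comm y₂ y₁, Set.insert_comm y₃ y₁, Set.pair_comm y₃ y₂])
  have htri := angle_add_angle_add_angle_eq_pi y₃ h12.symm
  linarith [angle_comm y₂ y₁ y₃, angle_comm y₂ y₃ y₁, angle_nonneg y₁ y₂ y₃]

end ConvexHull

section Plane

local notation "ℝ²" => EuclideanSpace ℝ (Fin 2)

def cross (u v : ℝ²) : ℝ := u 0 * v 1 - u 1 * v 0

theorem inner_eq_coord (u v : ℝ²) : inner ℝ u v = u 0 * v 0 + u 1 * v 1 := by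
  simp only [PiLp.inner_apply, RCLike.inner_apply, Real.ringHom_apply, Fin.sum_univ_two]
  ring

theorem dist_sq_eq_coord (u v : ℝ²) : dist u v ^ 2 = (u 0 - v 0) ^ 2 + (u 1 - v 1) ^ 2 := by
  rw [EuclideanSpace.dist_eq, Real.sq_sqrt (by positivity)]
  simp only [Real.dist_eq, sq_abs, Fin.sum_univ_two]

theorem sin_angle_mul_norm_mul_norm_eq_abs_cross (u v : ℝ²) :
    Real.sin (InnerProductGeometry.angle u v) * (‖u‖ * ‖v‖) = |cross u v| := by
  rw [InnerProductGeometry.sin_angle_mul_norm_mul_norm, ← Real.sqrt_sq_eq_abs, inner_eq_coord,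
    inner_eq_coord, inner_eq_coord, cross]
  ring_nf

theorem cos_angle_add_angle_mul_norm_mul_norm {u₁ v₁ u₂ v₂ : ℝ²}
    (h : cross u₁ v₁ * cross u₂ v₂ ≤ 0) :
    Real.cos (InnerProductGeometry.angle u₁ v₁ + InnerProductGeometry.angle u₂ v₂) *
        (‖u₁‖ * ‖v₁‖ * (‖u₂‖ * ‖v₂‖)) =
      inner ℝ u₁ v₁ * inner ℝ u₂ v₂ + cross u₁ v₁ * cross u₂ v₂ := by
  have hsin : |cross u₁ v₁| * |cross u₂ v₂| = -(cross u₁ v₁ * cross u₂ v₂) := by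
    rw [← abs_mul, abs_of_nonpos h]
  have hc₁ := InnerProductGeometry.cos_angle_mul_norm_mul_norm u₁ v₁
  have hc₂ := InnerProductGeometry.cos_angle_mul_norm_mul_norm u₂ v₂
  have hs₁ := sin_angle_mul_norm_mul_norm_eq_abs_cross u₁ v₁
  have hs₂ := sin_angle_mul_norm_mul_norm_eq_abs_cross u₂ v₂
  rw [Real.cos_add]
  linear_combination
    Real.cos (InnerProductGeometry.angle u₂ v₂) * (‖u₂‖ * ‖v₂‖) * hc₁ + inner ℝ u₁ v₁ * hc₂ -
      Real.sin (InnerProductGeometry.angle u₂ v₂) * (‖u₂‖ * ‖v₂‖) * hs₁ - |cross u₁ v₁| * hs₂ - hsin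

theorem cross_mul_cross_nonpos {y₁ y₂ y₃ y₄ : ℝ²} {a b c : ℝ} (ha : 0 ≤ a) (hc : 0 ≤ c)
    (habc : a + b + c = 1) (hy : y₄ = a • y₁ + b • y₂ + c • y₃) :
    cross (y₂ - y₁) (y₄ - y₁) * cross (y₂ - y₃) (y₄ - y₃) ≤ 0 := by
  have hy₀ : y₄ 0 = a * y₁ 0 + b * y₂ 0 + c * y₃ 0 := by simp [hy]
  have hy₁ : y₄ 1 = a * y₁ 1 + b * y₂ 1 + c * y₃ 1 := by simp [hy]
  have : cross (y₂ - y₁) (y₄ - y₁) * cross (y₂ - y₃) (y₄ - y₃) =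
      -(a * c * cross (y₂ - y₁) (y₃ - y₁) ^ 2) := by
    simp only [cross, PiLp.sub_apply, hy₀, hy₁]
    obtain rfl : a = 1 - b - c := by linarith
    ring
  rw [this, neg_nonpos]
  positivity

/-- In `ℂ`, the left side is `2 Re (X * conj Y)` for `X = (y₄ - y₁)(y₂ - y₃)` and
`Y = (y₂ - y₁)(y₄ - y₃)`, and `X - Y = (y₃ - y₁)(y₂ - y₄)`. -/
theorem inner_mul_inner_add_cross_mul_cross (y₁ y₂ y₃ y₄ : ℝ²) :
    2 * (inner ℝ (y₂ - y₁) (y₄ - y₁) * inner ℝ (y₂ - y₃) (y₄ - y₃) +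
        cross (y₂ - y₁) (y₄ - y₁) * cross (y₂ - y₃) (y₄ - y₃)) =
      (dist y₁ y₂ * dist y₃ y₄) ^ 2 + (dist y₁ y₄ * dist y₂ y₃) ^ 2 -
        (dist y₁ y₃ * dist y₂ y₄) ^ 2 := by
  simp only [mul_pow, dist_sq_eq_coord, inner_eq_coord, cross, PiLp.sub_apply]
  ring

theorem exists_triangle_dist_eq_mul_dist (x₁ x₂ x₃ x₄ : ℝ²) :
    ∃ P Q R : ℝ², ({dist P Q, dist P R, dist Q R} : Multiset ℝ) =
      {dist x₁ x₂ * dist x₃ x₄, dist x₁ x₃ * dist x₂ x₄, dist x₁ x₄ * dist x₂ x₃} := by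
  let e := Complex.orthonormalBasisOneI.repr
  obtain ⟨z₁, rfl⟩ := e.surjective x₁
  obtain ⟨z₂, rfl⟩ := e.surjective x₂
  obtain ⟨z₃, rfl⟩ := e.surjective x₃
  obtain ⟨z₄, rfl⟩ := e.surjective x₄
  refine ⟨e 0, e ((z₁ - z₂) * (z₃ - z₄)), e ((z₁ - z₃) * (z₂ - z₄)), ?_⟩
  have ptolemy : (z₁ - z₂) * (z₃ - z₄) - (z₁ - z₃) * (z₂ - z₄) = -((z₁ - z₄) * (z₂ - z₃)) := by
    ring
  simp only [e.dist_map, dist_eq_norm, zero_sub, norm_neg, norm_mul, ptolemy]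

theorem angle_add_angle_eq_oppositeAngle {y₁ y₂ y₃ y₄ : ℝ²} {s : Multiset ℝ}
    (h12 : y₁ ≠ y₂) (h13 : y₁ ≠ y₃) (h14 : y₁ ≠ y₄) (h23 : y₂ ≠ y₃) (h24 : y₂ ≠ y₄)
    (h34 : y₃ ≠ y₄) (hy : y₄ ∈ convexHull ℝ {y₁, y₂, y₃})
    (hs : s = {dist y₁ y₃ * dist y₂ y₄, dist y₁ y₂ * dist y₃ y₄, dist y₁ y₄ * dist y₂ y₃}) :
    ∠ y₂ y₁ y₄ + ∠ y₂ y₃ y₄ = oppositeAngle s (dist y₁ y₃ * dist y₂ y₄) := by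
  refine eq_oppositeAngle_of_cos hs (by simp [h13, h24]) (by simp [h12, h34])
    (by simp [h14, h23]) (add_nonneg (angle_nonneg _ _ _) (angle_nonneg _ _ _))
    (angle_add_angle_le_pi_of_mem_convexHull h12 h14 h34 hy) ?_
  obtain ⟨a, b, c, ha, -, hc, habc, hy'⟩ :=
    exists_eq_smul_add_smul_add_smul_of_mem_convexHull hy
  have hcos := cos_angle_add_angle_mul_norm_mul_norm (cross_mul_cross_nonpos ha hc habc hy')
  rw [← inner_mul_inner_add_cross_mul_cross, ← hcos, ← dist_eq_norm, ← dist_eq_norm,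
    ← dist_eq_norm, ← dist_eq_norm]
  simp only [angle, vsub_eq_sub, dist_comm y₂ y₁, dist_comm y₄ y₁, dist_comm y₂ y₃,
    dist_comm y₄ y₃]
  ring

end Plane

/-- If `x₄` lies in the interior of the triangle `x₁x₂x₃`, then the Crelle triangle
(with side lengths `x₁x₂·x₃x₄`, `x₁x₃·x₂x₄`, `x₁x₄·x₂x₃`) has angles
`α₁₂ + α₂₁`, `α₁₃ + α₃₁`, `α₂₃ + α₃₂`. -/
theorem crelle_triangle_angles_interior_point (x₁ x₂ x₃ x₄ : EuclideanSpace ℝ (Fin 2))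
    (h12 : x₁ ≠ x₂) (h13 : x₁ ≠ x₃) (h14 : x₁ ≠ x₄)
    (h23 : x₂ ≠ x₃) (h24 : x₂ ≠ x₄) (h34 : x₃ ≠ x₄)
    (h4 : x₄ ∈ interior (convexHull ℝ ({x₁, x₂, x₃} : Set (EuclideanSpace ℝ (Fin 2))))) :
    (∃ P Q R : EuclideanSpace ℝ (Fin 2),
      ({dist P Q, dist P R, dist Q R} : Multiset ℝ) =
        ({dist x₁ x₂ * dist x₃ x₄, dist x₁ x₃ * dist x₂ x₄, dist x₁ x₄ * dist x₂ x₃} : Multiset ℝ)) ∧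
    ∀ P Q R : EuclideanSpace ℝ (Fin 2),
      ({dist P Q, dist P R, dist Q R} : Multiset ℝ) =
        ({dist x₁ x₂ * dist x₃ x₄, dist x₁ x₃ * dist x₂ x₄, dist x₁ x₄ * dist x₂ x₃} : Multiset ℝ) →
      ({∠ Q P R, ∠ P Q R, ∠ P R Q} : Multiset ℝ) =
        ({∠ x₃ x₁ x₄ + ∠ x₃ x₂ x₄, ∠ x₂ x₁ x₄ + ∠ x₂ x₃ x₄, ∠ x₁ x₂ x₄ + ∠ x₁ x₃ x₄} : Multiset ℝ) := by
  refine ⟨exists_triangle_dist_eq_mul_dist x₁ x₂ x₃ x₄, fun P Q R h => ?_⟩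
  have hsides : ∀ d ∈ ({dist P Q, dist P R, dist Q R} : Multiset ℝ), 0 < d := by
    rw [h]
    simp [h12, h13, h14, h23, h24, h34]
  simp only [Multiset.insert_eq_cons, Multiset.forall_mem_cons, Multiset.mem_singleton,
    forall_eq, dist_pos] at hsides
  obtain ⟨hPQ, hPR, hQR⟩ := hsides
  have hx : x₄ ∈ convexHull ℝ {x₁, x₂, x₃} := interior_subset h4
  set s : Multiset ℝ :=
    {dist x₁ x₂ * dist x₃ x₄, dist x₁ x₃ * dist x₂ x₄, dist x₁ x₄ * dist x₂ x₃} with hs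
  rw [multiset_angles_eq_map_oppositeAngle hPQ hPR hQR, h,
    angle_add_angle_eq_oppositeAngle (s := s) h13 h12 h14 h23.symm h34 h24
      (by rwa [Set.pair_comm]) (by rw [hs, dist_comm x₃ x₂]),
    angle_add_angle_eq_oppositeAngle (s := s) h12 h13 h14 h23 h24 h34 hx
      (by simp only [hs, Multiset.insert_eq_cons, ← Multiset.cons_zero, Multiset.cons_swap]),
    angle_add_angle_eq_oppositeAngle (s := s) h12.symm h23 h24 h13 h14 h34
      (by rwa [Set.insert_comm]) (by
        rw [hs, dist_comm x₂ x₁, mul_comm (dist x₂ x₃), mul_comm (dist x₂ x₄)]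
        simp only [Multiset.insert_eq_cons, ← Multiset.cons_zero, Multiset.cons_swap])]
  simp only [hs, Multiset.insert_eq_cons, Multiset.map_cons, Multiset.map_singleton,
    mul_comm (dist x₂ x₃)]
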